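/- Let G be a finite C4-free simple graph and v a vertex of G. Then \sum_{e \in D_v(0)} |Sect_e(2)| \le 2 |D_v(2)|. -/

import Mathlib

/-! Double counting: an edge `f = xy` of `D_v(2)` lies in `Sect_{vu}(2)` only if `u` is adjacent
to `x` or to `y`. As `x` and `y` are at distance at least two from `v`, `C₄`-freeness leaves at
most one common neighbour of `v` and `x`, and at most one of `v` and `y`, so each `f` is counted
at most twice. -/

open SimpleGraph

/-- A graph is `C₄`-free if it contains no cycle of length four as a subgraph,
i.e. there are no four distinct vertices `a, b, c, d` with
`a ~ b`, `b ~ c`, `c ~ d` and `d ~ a`. -/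
def C4Free {V : Type*} (G : SimpleGraph V) : Prop :=
  ¬ ∃ a b c d : V, a ≠ b ∧ a ≠ c ∧ a ≠ d ∧ b ≠ c ∧ b ≠ d ∧ c ≠ d ∧
      G.Adj a b ∧ G.Adj b c ∧ G.Adj c d ∧ G.Adj d a

/-- The distance between two edges (or generally two pairs of vertices):
the minimum over endpoints `x ∈ e`, `y ∈ f` of the graph distance. -/
noncomputable def edgeDist {V : Type*} (G : SimpleGraph V) (e f : Sym2 V) : ℕ∞ :=
  ⨅ x ∈ e, ⨅ y ∈ f, G.edist x y

/-- `Dkl G v k l` is the set of edges `{x, y}` of `G` with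
`dist(x, v) = k` and `dist(y, v) = l`. -/
def Dkl {V : Type*} (G : SimpleGraph V) (v : V) (k l : ℕ) : Set (Sym2 V) :=
  {e | e ∈ G.edgeSet ∧ ∃ x y : V, e = s(x, y) ∧
    G.edist x v = (k : ℕ∞) ∧ G.edist y v = (l : ℕ∞)}

/-- `D G v k = D_v(k) = D_v(k, k) ∪ D_v(k, k+1)`. -/
def D {V : Type*} (G : SimpleGraph V) (v : V) (k : ℕ) : Set (Sym2 V) :=
  Dkl G v k k ∪ Dkl G v k (k + 1)

/-- `Sect G v e = Sect_e(2)`: the edges of `D_v(2)` at distance exactly one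
from the edge `e`. -/
noncomputable def Sect {V : Type*} (G : SimpleGraph V) (v : V) (e : Sym2 V) : Set (Sym2 V) :=
  {f | f ∈ D G v 2 ∧ edgeDist G e f = 1}

/-- An induced matching: a set `M` of edges of `G` such that the subgraph of `G`
induced by the set of all endpoints of edges in `M` has edge set exactly `M`. -/
def IsInducedMatching {V : Type*} (G : SimpleGraph V) (M : Set (Sym2 V)) : Prop :=
  M ⊆ G.edgeSet ∧ {e ∈ G.edgeSet | ∀ x ∈ e, ∃ f ∈ M, x ∈ f} = M

theorem finsum_mem_ncard_le_mul_ncard {α β : Type*} {s : Set α} {t : Set β}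
    (hs : s.Finite) (ht : t.Finite) {r : α → Set β} (hr : ∀ a ∈ s, r a ⊆ t) {n : ℕ}
    (hn : ∀ b ∈ t, {a ∈ s | b ∈ r a}.ncard ≤ n) :
    ∑ᶠ a ∈ s, (r a).ncard ≤ n * t.ncard := by
  classical
  rw [finsum_mem_eq_finite_toFinset_sum _ hs, Set.ncard_eq_toFinset_card _ ht]
  have hAbove : ∀ a ∈ hs.toFinset,
      (r a).ncard = (ht.toFinset.bipartiteAbove (fun a b ↦ b ∈ r a) a).card := by
    intro a ha
    rw [← Set.ncard_coe_finset, Finset.coe_bipartiteAbove]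
    congr 1
    ext b
    exact ⟨fun hb ↦ ⟨ht.mem_toFinset.mpr (hr a (hs.mem_toFinset.mp ha) hb), hb⟩, And.right⟩
  have hBelow : ∀ b ∈ ht.toFinset,
      (hs.toFinset.bipartiteBelow (fun a b ↦ b ∈ r a) b).card ≤ n := by
    intro b hb
    rw [← Set.ncard_coe_finset, Finset.coe_bipartiteBelow]
    simpa only [Set.Finite.mem_toFinset] using hn b (ht.mem_toFinset.mp hb)
  calc ∑ a ∈ hs.toFinset, (r a).ncard
      = ∑ a ∈ hs.toFinset, (ht.toFinset.bipartiteAbove (fun a b ↦ b ∈ r a) a).card :=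
        Finset.sum_congr rfl hAbove
    _ = ∑ b ∈ ht.toFinset, (hs.toFinset.bipartiteBelow (fun a b ↦ b ∈ r a) b).card :=
        Finset.sum_card_bipartiteAbove_eq_sum_card_bipartiteBelow _
    _ ≤ ht.toFinset.card • n := Finset.sum_le_card_nsmul _ _ _ hBelow
    _ = n * ht.toFinset.card := by rw [smul_eq_mul, mul_comm]

theorem Sym2.iInf_mem_mk {α β : Type*} [CompleteLattice β] (a b : α) (F : α → β) :
    ⨅ x ∈ s(a, b), F x = F a ⊓ F b := by
  simp only [Sym2.mem_iff, iInf_or, iInf_inf_eq, iInf_iInf_eq_left]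

namespace C4Free

variable {V : Type*} {G : SimpleGraph V}

theorem commonNeighbors_subsingleton (hG : C4Free G) {v w : V} (hvw : v ≠ w) :
    (G.commonNeighbors v w).Subsingleton := by
  rintro a ⟨hva, hwa⟩ b ⟨hvb, hwb⟩
  by_contra hab
  exact hG ⟨v, a, w, b, hva.ne, hvw, hvb.ne, hwa.ne', hab, hwb.ne, hva, hwa.symm, hwb, hvb.symm⟩

end C4Free

section Layers

variable {V : Type*} {G : SimpleGraph V} {v : V}

theorem edgeDist_mk_mk (a b c d : V) :
    edgeDist G s(a, b) s(c, d) =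
      (G.edist a c ⊓ G.edist a d) ⊓ (G.edist b c ⊓ G.edist b d) := by
  simp only [edgeDist, Sym2.iInf_mem_mk]

theorem adj_or_adj_of_edgeDist_eq_one {u x y : V} (hx : G.edist v x ≠ 1)
    (hy : G.edist v y ≠ 1) (h : edgeDist G s(v, u) s(x, y) = 1) :
    G.Adj u x ∨ G.Adj u y := by
  rw [edgeDist_mk_mk] at h
  simp only [← edist_eq_one_iff_adj]
  rcases min_choice (G.edist v x ⊓ G.edist v y) (G.edist u x ⊓ G.edist u y) with h' | h' <;>
    rw [h'] at h
  · rcases min_choice (G.edist v x) (G.edist v y) with h'' | h'' <;> rw [h''] at h <;>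
      contradiction
  · rcases min_choice (G.edist u x) (G.edist u y) with h'' | h'' <;> rw [h''] at h
    exacts [.inl h, .inr h]

theorem exists_adj_of_mem_D_zero {e : Sym2 V} (he : e ∈ D G v 0) :
    ∃ u, G.Adj v u ∧ e = s(v, u) := by
  rcases he with ⟨he, x, y, rfl, hx, hy⟩ | ⟨he, x, y, rfl, hx, hy⟩ <;>
    rw [Nat.cast_zero, edist_eq_zero_iff] at hx <;> subst hx
  · rw [Nat.cast_zero, edist_eq_zero_iff] at hy
    subst hy
    exact absurd he (G.not_mem_edgeSet_of_isDiag rfl)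
  · rw [zero_add, Nat.cast_one, edist_eq_one_iff_adj] at hy
    exact ⟨y, hy.symm, rfl⟩

theorem exists_eq_mk_of_mem_D_two {f : Sym2 V} (hf : f ∈ D G v 2) :
    ∃ x y, f = s(x, y) ∧ 2 ≤ G.edist v x ∧ 2 ≤ G.edist v y := by
  rcases hf with ⟨-, x, y, rfl, hx, hy⟩ | ⟨-, x, y, rfl, hx, hy⟩ <;>
    refine ⟨x, y, rfl, ?_, ?_⟩ <;> rw [edist_comm] <;> norm_num [hx, hy]

theorem Sect_subset_D_two (e : Sym2 V) : Sect G v e ⊆ D G v 2 := fun _ hf ↦ hf.1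

theorem ncard_setOf_mem_D_zero_mem_Sect_le_two [Finite V] (hG : C4Free G) {f : Sym2 V}
    (hf : f ∈ D G v 2) : {e ∈ D G v 0 | f ∈ Sect G v e}.ncard ≤ 2 := by
  obtain ⟨x, y, rfl, hx, hy⟩ := exists_eq_mk_of_mem_D_two hf
  have hne_one : ∀ {z}, 2 ≤ G.edist v z → G.edist v z ≠ 1 := fun h h1 ↦ by
    rw [h1] at h; exact absurd h (by decide)
  have hne : ∀ {z}, 2 ≤ G.edist v z → v ≠ z := fun h hvz ↦ by
    subst hvz; rw [edist_self] at h; exact absurd h (by decide)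
  have hsub : {e ∈ D G v 0 | s(x, y) ∈ Sect G v e} ⊆
      (fun u ↦ s(v, u)) '' (G.commonNeighbors v x ∪ G.commonNeighbors v y) := by
    rintro e ⟨he, -, hd⟩
    obtain ⟨u, hvu, rfl⟩ := exists_adj_of_mem_D_zero he
    rcases adj_or_adj_of_edgeDist_eq_one (hne_one hx) (hne_one hy) hd with hux | huy
    exacts [⟨u, .inl ⟨hvu, hux.symm⟩, rfl⟩, ⟨u, .inr ⟨hvu, huy.symm⟩, rfl⟩]
  calc _ ≤ _ := Set.ncard_le_ncard hsub
    _ ≤ _ := Set.ncard_image_le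
    _ ≤ _ := Set.ncard_union_le _ _
    _ ≤ 1 + 1 := add_le_add
        (Set.ncard_le_one_iff_subsingleton.mpr (hG.commonNeighbors_subsingleton (hne hx)))
        (Set.ncard_le_one_iff_subsingleton.mpr (hG.commonNeighbors_subsingleton (hne hy)))

end Layers

/-- In a finite C4-free graph, sum over e in D_v(0) of |Sect_e(2)| is at most 2|D_v(2)|. -/
theorem stmt_5 {V : Type*} [Fintype V] (G : SimpleGraph V) (hG : C4Free G) (v : V) :
    ∑ᶠ e ∈ D G v 0, (Sect G v e).ncard ≤ 2 * (D G v 2).ncard :=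
  finsum_mem_ncard_le_mul_ncard (Set.toFinite _) (Set.toFinite _)
    (fun e _ ↦ Sect_subset_D_two e) fun _ hf ↦ ncard_setOf_mem_D_zero_mem_Sect_le_two hG hf
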